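/- Let A be definite and let x be a linear combination of all columns of A* with strictly positive coefficients, X = diag(x). Then X⁻¹AX is strictly visualized: (X⁻¹AX)_ij = 1 for every critical edge (i,j) and (X⁻¹AX)_ij < 1 for every non-critical edge (i,j). Moreover x is positive. -/

import Mathlib

/-!
Since `λ(A) = 1`, every cycle has weight at most `1`, so closed subwalks can be cut out of any
walk and `A*_{ik}` is the largest weight of a walk from `i` to `k`. Hence `A*_{ii} = 1` and
`a_{ij} A*_{jk} ≤ A*_{ik}`; summing against the `c_k` gives `a_{ij} x_j ≤ x_i` and
`x_i ≥ c_i > 0`. Equality `a_{ij} x_j = x_i` holds iff it holds termwise, iff `a_{ij} A*_{ji} = 1`,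
i.e. iff the edge `(i, j)` closes a walk `j → i` into a cycle of weight `1`: iff `(i, j)` is critical.
-/

open Finset

/-- Max-times matrix product: `(A ⊗ B) i j = max_k (A i k * B k j)`. -/
noncomputable def mProd {n : ℕ} (A B : Matrix (Fin n) (Fin n) NNReal) :
    Matrix (Fin n) (Fin n) NNReal :=
  fun i j => univ.sup fun k => A i k * B k j

/-- Max-algebraic matrix powers, `mPow A 0 = I`. -/
noncomputable def mPow {n : ℕ} (A : Matrix (Fin n) (Fin n) NNReal) :
    ℕ → Matrix (Fin n) (Fin n) NNReal
  | 0 => fun i j => if i = j then 1 else 0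
  | k + 1 => mProd (mPow A k) A

/-- Kleene star `A* = I ⊕ A ⊕ ... ⊕ A^{n-1}` in max algebra. -/
noncomputable def klStar {n : ℕ} (A : Matrix (Fin n) (Fin n) NNReal) :
    Matrix (Fin n) (Fin n) NNReal :=
  fun i j => (Finset.range n).sup fun k => mPow A k i j

/-- Partial "sums" `I ⊕ A ⊕ ... ⊕ A^m` of the Kleene star series. -/
noncomputable def kPartial {n : ℕ} (A : Matrix (Fin n) (Fin n) NNReal) (m : ℕ) :
    Matrix (Fin n) (Fin n) NNReal :=
  fun i j => (Finset.range (m + 1)).sup fun k => mPow A k i j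

/-- The weight of the cycle given by the list `l` (with wrap-around edge). -/
def cycleWeight {n : ℕ} (A : Matrix (Fin n) (Fin n) NNReal) (l : List (Fin n)) : NNReal :=
  ((l.zip (l.rotate 1)).map fun p => A p.1 p.2).prod

/-- The geometric mean of a cycle: `w(σ,A)^{1/k}`. -/
noncomputable def cycleMean {n : ℕ} (A : Matrix (Fin n) (Fin n) NNReal) (l : List (Fin n)) :
    NNReal :=
  (cycleWeight A l) ^ ((l.length : ℝ)⁻¹)

/-- The maximum cycle geometric mean `λ(A)`. -/
noncomputable def maxCycleMean {n : ℕ} (A : Matrix (Fin n) (Fin n) NNReal) : NNReal :=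
  sSup {x | ∃ l : List (Fin n), l ≠ [] ∧ x = cycleMean A l}

/-- `(i,j)` is a critical edge: it lies on a cycle attaining `λ(A)`. -/
def criticalEdge {n : ℕ} (A : Matrix (Fin n) (Fin n) NNReal) (i j : Fin n) : Prop :=
  ∃ l : List (Fin n), l ≠ [] ∧ cycleMean A l = maxCycleMean A ∧ (i, j) ∈ l.zip (l.rotate 1)

/-- Max-algebraic matrix-vector product. -/
noncomputable def mVec {n : ℕ} (A : Matrix (Fin n) (Fin n) NNReal) (x : Fin n → NNReal) :
    Fin n → NNReal :=
  fun i => univ.sup fun j => A i j * x j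

namespace List

theorem getLastD_append {α : Type*} (l₁ l₂ : List α) (a : α) :
    (l₁ ++ l₂).getLastD a = l₂.getLastD (l₁.getLastD a) := by
  induction l₁ generalizing a with
  | nil => rfl
  | cons b l₁ ih => simp only [cons_append, getLastD_cons, ih]

theorem exists_eq_append_cons_of_mem_zip_cons {α : Type*} {a i j : α} {l : List α}
    (h : (i, j) ∈ (a :: l).zip l) : ∃ p q, l = p ++ j :: q ∧ p.getLastD a = i := by
  induction l generalizing a with
  | nil => simp at h
  | cons b l ih =>
    rw [zip_cons_cons, mem_cons, Prod.mk.injEq] at h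
    rcases h with ⟨rfl, rfl⟩ | h
    · exact ⟨[], l, rfl, rfl⟩
    · obtain ⟨p, q, rfl, hp⟩ := ih h
      exact ⟨b :: p, q, rfl, by rwa [getLastD_cons]⟩

end List

open List

section

variable {n : ℕ} (A : Matrix (Fin n) (Fin n) NNReal)

/-- The weight of the walk `a → l₀ → l₁ → ⋯`, which ends at `l.getLastD a`. -/
def walkWeight : Fin n → List (Fin n) → NNReal
  | _, [] => 1
  | a, b :: l => A a b * walkWeight b l

@[simp] theorem walkWeight_nil (a : Fin n) : walkWeight A a [] = 1 := rfl

@[simp] theorem walkWeight_cons (a b : Fin n) (l : List (Fin n)) :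
    walkWeight A a (b :: l) = A a b * walkWeight A b l := rfl

theorem walkWeight_append (a : Fin n) (l₁ l₂ : List (Fin n)) :
    walkWeight A a (l₁ ++ l₂) = walkWeight A a l₁ * walkWeight A (l₁.getLastD a) l₂ := by
  induction l₁ generalizing a with
  | nil => simp
  | cons b l₁ ih => simp only [cons_append, walkWeight_cons, ih, getLastD_cons, mul_assoc]

theorem cycleWeight_cons (a : Fin n) (t : List (Fin n)) :
    cycleWeight A (a :: t) = walkWeight A a (t ++ [a]) := by
  suffices h : ∀ b, (((b :: t).zip (t ++ [a])).map fun p => A p.1 p.2).prod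
      = walkWeight A b (t ++ [a]) by
    rw [cycleWeight, rotate_cons_succ, rotate_zero, h]
  induction t with
  | nil => simp
  | cons c t ih => intro b; simp [ih]

theorem walkWeight_le_mPow (a : Fin n) (l : List (Fin n)) :
    walkWeight A a l ≤ mPow A l.length a (l.getLastD a) := by
  induction l using List.reverseRecOn with
  | nil => simp [mPow]
  | append_singleton l b ih =>
    rw [walkWeight_append, walkWeight_cons, walkWeight_nil, mul_one, getLastD_concat,
      length_append, length_singleton]
    calc walkWeight A a l * A (l.getLastD a) b
        ≤ mPow A l.length a (l.getLastD a) * A (l.getLastD a) b := by gcongr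
      _ ≤ mPow A (l.length + 1) a b :=
        Finset.le_sup (f := fun k => mPow A l.length a k * A k b) (Finset.mem_univ _)

theorem exists_walkWeight_eq_mPow {m : ℕ} {a b : Fin n} (h : mPow A m a b ≠ 0) :
    ∃ l : List (Fin n), l.getLastD a = b ∧ walkWeight A a l = mPow A m a b := by
  induction m generalizing b with
  | zero =>
    obtain rfl : a = b := by by_contra hab; simp [mPow, hab] at h
    exact ⟨[], rfl, by simp [mPow]⟩
  | succ m ih =>
    obtain ⟨k, -, hk⟩ := Finset.exists_mem_eq_sup Finset.univ ⟨a, Finset.mem_univ a⟩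
      (fun k => mPow A m a k * A k b)
    have hval : mPow A (m + 1) a b = mPow A m a k * A k b := hk
    obtain ⟨l, hl, hw⟩ := ih (b := k) (left_ne_zero_of_mul (hval ▸ h))
    refine ⟨l ++ [b], getLastD_concat, ?_⟩
    rw [walkWeight_append, hl, hw, hval, walkWeight_cons, walkWeight_nil, mul_one]

theorem exists_walkWeight_eq_klStar {a b : Fin n} (h : klStar A a b ≠ 0) :
    ∃ l : List (Fin n), l.getLastD a = b ∧ walkWeight A a l = klStar A a b := by
  obtain ⟨k, -, hk⟩ := Finset.exists_mem_eq_sup (Finset.range n) ⟨0, Finset.mem_range.2 a.pos⟩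
    (fun k => mPow A k a b)
  have hval : klStar A a b = mPow A k a b := hk
  rw [hval] at h ⊢
  exact exists_walkWeight_eq_mPow A h

theorem cycleMean_le_of_forall_le {M : NNReal} (hM : ∀ i j, A i j ≤ M) {l : List (Fin n)}
    (hl : l ≠ []) : cycleMean A l ≤ M := by
  have hlen : (0 : ℝ) < l.length := by exact_mod_cast length_pos_iff.mpr hl
  rw [cycleMean, NNReal.rpow_inv_le_iff hlen, NNReal.rpow_natCast]
  refine (prod_le_pow_card _ M ?_).trans_eq (by simp)
  simp only [List.mem_map]
  rintro _ ⟨p, -, rfl⟩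
  exact hM p.1 p.2

theorem cycleMean_le_maxCycleMean {l : List (Fin n)} (hl : l ≠ []) :
    cycleMean A l ≤ maxCycleMean A := by
  refine le_csSup ⟨Finset.univ.sup fun p : Fin n × Fin n => A p.1 p.2, ?_⟩ ⟨l, hl, rfl⟩
  rintro _ ⟨l', hl', rfl⟩
  exact cycleMean_le_of_forall_le A
    (fun i j => Finset.le_sup (f := fun p : Fin n × Fin n => A p.1 p.2) (Finset.mem_univ (i, j))) hl'

theorem cycleWeight_le_one {l : List (Fin n)} (hA : maxCycleMean A ≤ 1) (hl : l ≠ []) :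
    cycleWeight A l ≤ 1 := by
  have hlen : (0 : ℝ) < l.length := by exact_mod_cast length_pos_iff.mpr hl
  simpa [cycleMean, NNReal.rpow_inv_le_iff hlen] using (cycleMean_le_maxCycleMean A hl).trans hA

theorem cycleMean_eq_one_iff {l : List (Fin n)} (hl : l ≠ []) :
    cycleMean A l = 1 ↔ cycleWeight A l = 1 := by
  have hlen : (l.length : ℝ) ≠ 0 := by exact_mod_cast (length_pos_iff.mpr hl).ne'
  rw [cycleMean, NNReal.rpow_inv_eq_iff hlen, NNReal.one_rpow]

section CyclesAtMostOne

variable {A} (hcyc : ∀ l : List (Fin n), l ≠ [] → cycleWeight A l ≤ 1)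
include hcyc

theorem walkWeight_le_one_of_getLastD_eq {a : Fin n} {l : List (Fin n)} (h : l.getLastD a = a) :
    walkWeight A a l ≤ 1 := by
  rcases eq_nil_or_concat l with rfl | ⟨t, b, rfl⟩
  · simp
  rw [concat_eq_append, getLastD_concat] at h
  subst h
  rw [concat_eq_append, ← cycleWeight_cons]
  exact hcyc _ (cons_ne_nil _ _)

theorem exists_nodup_walkWeight_le (a : Fin n) (l : List (Fin n)) :
    ∃ l' : List (Fin n), (a :: l').Nodup ∧ l'.getLastD a = l.getLastD a ∧
      walkWeight A a l ≤ walkWeight A a l' := by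
  induction l generalizing a with
  | nil => exact ⟨[], nodup_singleton a, rfl, le_rfl⟩
  | cons b l ih =>
    obtain ⟨l', hnd, hend, hle⟩ := ih b
    have hw : walkWeight A a (b :: l) ≤ walkWeight A a (b :: l') := by
      simp only [walkWeight_cons]; gcongr
    by_cases ha : a ∈ b :: l'
    · -- `a` is revisited: cut out the closed walk from `a` back to `a`
      obtain ⟨p, q, hpq⟩ := append_of_mem ha
      refine ⟨q, ?_, ?_, ?_⟩
      · exact (hpq ▸ hnd).of_append_right
      · calc q.getLastD a = (p ++ a :: q).getLastD a := by rw [getLastD_append, getLastD_cons]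
          _ = (b :: l).getLastD a := by rw [← hpq, getLastD_cons, getLastD_cons, hend]
      · calc walkWeight A a (b :: l) ≤ walkWeight A a ((p ++ [a]) ++ q) := by
              rwa [append_assoc, singleton_append, ← hpq]
          _ ≤ 1 * walkWeight A a q := by
              rw [walkWeight_append, getLastD_concat]
              gcongr
              exact walkWeight_le_one_of_getLastD_eq hcyc getLastD_concat
          _ = walkWeight A a q := one_mul _
    · exact ⟨b :: l', nodup_cons.2 ⟨ha, hnd⟩, by rw [getLastD_cons, getLastD_cons, hend], hw⟩

theorem walkWeight_le_klStar (a : Fin n) (l : List (Fin n)) :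
    walkWeight A a l ≤ klStar A a (l.getLastD a) := by
  obtain ⟨l', hnd, hend, hle⟩ := exists_nodup_walkWeight_le hcyc a l
  have hlen : l'.length < n := by simpa using hnd.length_le_card
  calc walkWeight A a l ≤ mPow A l'.length a (l.getLastD a) :=
        hend ▸ hle.trans (walkWeight_le_mPow A a l')
    _ ≤ klStar A a (l.getLastD a) :=
        Finset.le_sup (f := fun k => mPow A k a (l.getLastD a)) (Finset.mem_range.2 hlen)

theorem klStar_self (a : Fin n) : klStar A a a = 1 := by
  refine le_antisymm ?_ (walkWeight_le_klStar hcyc a [])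
  by_cases h : klStar A a a = 0
  · simp [h]
  obtain ⟨l, hl, hw⟩ := exists_walkWeight_eq_klStar A h
  exact hw ▸ walkWeight_le_one_of_getLastD_eq hcyc hl

theorem klStar_mul_klStar_le (a b c : Fin n) : klStar A a b * klStar A b c ≤ klStar A a c := by
  by_cases hab : klStar A a b = 0
  · simp [hab]
  by_cases hbc : klStar A b c = 0
  · simp [hbc]
  obtain ⟨l₁, hl₁, hw₁⟩ := exists_walkWeight_eq_klStar A hab
  obtain ⟨l₂, hl₂, hw₂⟩ := exists_walkWeight_eq_klStar A hbc
  have h := walkWeight_le_klStar hcyc a (l₁ ++ l₂)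
  rwa [walkWeight_append, getLastD_append, hl₁, hl₂, hw₁, hw₂] at h

theorem mul_klStar_le (i j k : Fin n) : A i j * klStar A j k ≤ klStar A i k := by
  have hA_le : A i j ≤ klStar A i j := by simpa using walkWeight_le_klStar hcyc i [j]
  exact (mul_le_mul_left hA_le _).trans (klStar_mul_klStar_le hcyc i j k)

theorem klStar_le_mul_klStar {i j : Fin n} (h : A i j * klStar A j i = 1) (k : Fin n) :
    klStar A i k ≤ A i j * klStar A j k :=
  calc klStar A i k = A i j * (klStar A j i * klStar A i k) := by rw [← mul_assoc, h, one_mul]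
    _ ≤ A i j * klStar A j k := by gcongr; exact klStar_mul_klStar_le hcyc j i k

end CyclesAtMostOne

theorem mul_klStar_eq_one_of_criticalEdge (hA : maxCycleMean A = 1) {i j : Fin n}
    (hij : criticalEdge A i j) : A i j * klStar A j i = 1 := by
  have hcyc : ∀ l : List (Fin n), l ≠ [] → cycleWeight A l ≤ 1 :=
    fun l hl => cycleWeight_le_one A hA.le hl
  obtain ⟨l, hl, hmean, hij⟩ := hij
  obtain ⟨a, t, rfl⟩ := exists_cons_of_ne_nil hl
  have hw : walkWeight A a (t ++ [a]) = 1 := by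
    rw [← cycleWeight_cons, ← cycleMean_eq_one_iff A hl, hmean, hA]
  have hzip : (a :: (t ++ [a])).zip (t ++ [a]) = (a :: t).zip (t ++ [a]) := by
    simpa using zip_append (l₁ := a :: t) (r₁ := [a]) (r₂ := ([] : List (Fin n))) (by simp)
  rw [rotate_cons_succ, rotate_zero, ← hzip] at hij
  obtain ⟨p, q, hpq, hp⟩ := exists_eq_append_cons_of_mem_zip_cons hij
  have hq : q.getLastD j = a :=
    calc q.getLastD j = (p ++ j :: q).getLastD a := by rw [getLastD_append, getLastD_cons]
      _ = a := by rw [← hpq, getLastD_concat]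
  -- the cycle read from `j` round to `i` is a walk `j → i` closed up by the edge `(i, j)`
  refine le_antisymm (klStar_self hcyc i ▸ mul_klStar_le hcyc i j i) ?_
  calc 1 = walkWeight A a (p ++ j :: q) := by rw [← hpq, hw]
    _ = A i j * walkWeight A j (q ++ p) := by
        rw [walkWeight_append, walkWeight_append, hp, hq, walkWeight_cons]; ring
    _ ≤ A i j * klStar A j i := by
        gcongr
        have h := walkWeight_le_klStar hcyc j (q ++ p)
        rwa [getLastD_append, hq, hp] at h

theorem criticalEdge_of_mul_klStar_eq_one (hA : maxCycleMean A = 1) {i j : Fin n}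
    (h : A i j * klStar A j i = 1) : criticalEdge A i j := by
  obtain ⟨l, hl, hw⟩ := exists_walkWeight_eq_klStar A (right_ne_zero_of_mul_eq_one h)
  obtain ⟨t, ht⟩ : ∃ t, j :: l = t ++ [i] := by
    rcases eq_nil_or_concat (j :: l) with h' | ⟨t, b, h'⟩
    · exact absurd h' (cons_ne_nil _ _)
    · rw [concat_eq_append] at h'
      have hb : b = i := by rw [← hl, ← getLastD_cons (a := j), h', getLastD_concat]
      exact ⟨t, hb ▸ h'⟩
  refine ⟨i :: t, cons_ne_nil _ _, ?_, ?_⟩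
  · rw [hA, cycleMean_eq_one_iff A (cons_ne_nil _ _), cycleWeight_cons, ← ht, walkWeight_cons,
      hw, h]
  · rw [rotate_cons_succ, rotate_zero, ← ht, zip_cons_cons]
    exact mem_cons_self

theorem criticalEdge_iff (hA : maxCycleMean A = 1) {i j : Fin n} :
    criticalEdge A i j ↔ A i j * klStar A j i = 1 :=
  ⟨mul_klStar_eq_one_of_criticalEdge A hA, criticalEdge_of_mul_klStar_eq_one A hA⟩

section StarCombination

variable {A} {c x : Fin n → NNReal} (hx : ∀ i, x i = ∑ k, c k * klStar A i k)
include hx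

theorem mul_eq_sum_klStar (i j : Fin n) :
    A i j * x j = ∑ k, c k * (A i j * klStar A j k) := by
  rw [hx, Finset.mul_sum]
  exact Finset.sum_congr rfl fun k _ => mul_left_comm _ _ _

variable (hcyc : ∀ l : List (Fin n), l ≠ [] → cycleWeight A l ≤ 1)
include hcyc

theorem pos_of_eq_sum_klStar (hc : ∀ k, 0 < c k) (i : Fin n) : 0 < x i :=
  calc 0 < c i * klStar A i i := by rw [klStar_self hcyc, mul_one]; exact hc i
    _ ≤ x i := hx i ▸ Finset.single_le_sum (f := fun k => c k * klStar A i k)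
        (fun _ _ => zero_le) (Finset.mem_univ i)

theorem mul_le_of_eq_sum_klStar (i j : Fin n) : A i j * x j ≤ x i := by
  rw [mul_eq_sum_klStar hx, hx i]
  gcongr with k
  exact mul_klStar_le hcyc i j k

theorem mul_eq_iff_of_eq_sum_klStar (hc : ∀ k, 0 < c k) {i j : Fin n} :
    A i j * x j = x i ↔ A i j * klStar A j i = 1 := by
  have hle : ∀ k ∈ Finset.univ, c k * (A i j * klStar A j k) ≤ c k * klStar A i k :=
    fun k _ => by gcongr; exact mul_klStar_le hcyc i j k
  rw [mul_eq_sum_klStar hx, hx i, Finset.sum_eq_sum_iff_of_le hle]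
  constructor
  · intro h
    have hi := h i (Finset.mem_univ i)
    rw [klStar_self hcyc] at hi
    exact mul_left_cancel₀ (hc i).ne' hi
  · intro h k _
    rw [le_antisymm (mul_klStar_le hcyc i j k) (klStar_le_mul_klStar hcyc h k)]

end StarCombination

end

/-- for definite `A`, a positive linear combination `x` of all
columns of `A*` is positive and `X⁻¹AX` is strictly visualized. -/
theorem stmt_15 {n : ℕ} (A : Matrix (Fin n) (Fin n) NNReal)
    (hdef : maxCycleMean A = 1)
    (c : Fin n → NNReal) (hc : ∀ k, 0 < c k)
    (x : Fin n → NNReal) (hx : ∀ i, x i = ∑ k, c k * klStar A i k) :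
    (∀ i, 0 < x i) ∧
    (∀ i j, criticalEdge A i j → (x i)⁻¹ * A i j * x j = 1) ∧
    (∀ i j, ¬ criticalEdge A i j → (x i)⁻¹ * A i j * x j < 1) := by
  have hcyc : ∀ l : List (Fin n), l ≠ [] → cycleWeight A l ≤ 1 :=
    fun l hl => cycleWeight_le_one A hdef.le hl
  have hpos := pos_of_eq_sum_klStar hx hcyc hc
  have hcrit : ∀ i j, A i j * x j = x i ↔ criticalEdge A i j := fun i j =>
    (mul_eq_iff_of_eq_sum_klStar hx hcyc hc).trans (criticalEdge_iff A hdef).symm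
  refine ⟨hpos, fun i j hij => ?_, fun i j hij => ?_⟩
  · rw [mul_assoc, (hcrit i j).2 hij, inv_mul_cancel₀ (hpos i).ne']
  · rw [mul_assoc, inv_mul_lt_iff₀ (hpos i), mul_one]
    exact (mul_le_of_eq_sum_klStar hx hcyc i j).lt_of_ne (mt (hcrit i j).1 hij)
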